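/- For every graph G isomorphic to a member of S, the inequality ι_2(G) ≤ ⌊(4|V(G)| − ℓ(G))/14⌋ fails, i.e. ι_2(G) > ⌊(4|V(G)| − ℓ(G))/14⌋, where ℓ(G) is the number of leaves of G. -/
import Mathlib


open SimpleGraph

/-- `G` contains a copy of `H` as a (not necessarily induced) subgraph. -/
def SimpleGraph.ContainsCopy {V W : Type*} (G : SimpleGraph V) (H : SimpleGraph W) : Prop :=
  ∃ f : W ↪ V, ∀ a b, H.Adj a b → G.Adj (f a) (f b)

/-- The closed neighbourhood `N[D]` of a set `D` of vertices. -/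
def SimpleGraph.closedNbhdSet {V : Type*} (G : SimpleGraph V) (D : Set V) : Set V :=
  D ∪ ⋃ v ∈ D, G.neighborSet v

/-- `D` is an `F`-isolating set of `G`: the graph `G − N[D]` obtained by deleting the closed
neighbourhood of `D` contains no subgraph isomorphic to a member of the family `F`. -/
def SimpleGraph.IsIsolatingSet {V : Type*} (G : SimpleGraph V)
    (F : Set ((n : ℕ) × SimpleGraph (Fin n))) (D : Set V) : Prop :=
  ∀ H ∈ F, ¬ (G.induce (G.closedNbhdSet D)ᶜ).ContainsCopy H.2

/-- The `F`-isolation number of `G`: the minimum size of an `F`-isolating set. -/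
noncomputable def SimpleGraph.isolationNumber {V : Type*} (G : SimpleGraph V)
    (F : Set ((n : ℕ) × SimpleGraph (Fin n))) : ℕ :=
  sInf (Set.ncard '' {D : Set V | G.IsIsolatingSet F D})

/-- The family 𝓒 of all cycles `C_m`, `m ≥ 3`. -/
def CyclesFamily : Set ((n : ℕ) × SimpleGraph (Fin n)) :=
  {H | ∃ m : ℕ, 3 ≤ m ∧ H = ⟨m, SimpleGraph.cycleGraph m⟩}

/-- The family 𝓔_k of all connected graphs with at least `k` edges. -/
def EkFamily (k : ℕ) : Set ((n : ℕ) × SimpleGraph (Fin n)) :=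
  {H | H.2.Connected ∧ k ≤ H.2.edgeSet.ncard}

/-- The set of leaves (vertices of degree 1) of `G`. -/
def SimpleGraph.leafSet {V : Type*} (G : SimpleGraph V) : Set V :=
  {v | (G.neighborSet v).ncard = 1}

/-- `ℓ(G)`, the number of leaves of `G`. -/
noncomputable def SimpleGraph.numLeaves {V : Type*} (G : SimpleGraph V) : ℕ :=
  G.leafSet.ncard

/-- The star `K_{1,3}` on 4 vertices (centre `0`). -/
def K13 : SimpleGraph (Fin 4) := SimpleGraph.fromRel (fun x _ => x = 0)

/-- `C_6'`: a 6-cycle `0-1-2-3-4-5-0` together with a pendant vertex `6` adjacent to `0`. -/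
def C6p : SimpleGraph (Fin 7) :=
  SimpleGraph.fromRel (fun x y =>
    ((x : ℕ) + 1 = (y : ℕ) ∧ (y : ℕ) ≤ 5) ∨ (x = 0 ∧ y = 5) ∨ (x = 0 ∧ y = 6))

/-- `C_6''`: `C_6'` with the additional edge joining the two cycle vertices at distance 2
from the attachment vertex, i.e. the edge `{2,4}`. -/
def C6pp : SimpleGraph (Fin 7) :=
  SimpleGraph.fromRel (fun x y =>
    ((x : ℕ) + 1 = (y : ℕ) ∧ (y : ℕ) ≤ 5) ∨ (x = 0 ∧ y = 5) ∨ (x = 0 ∧ y = 6) ∨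
      (x = 2 ∧ y = 4))

instance : DecidableRel C6p.Adj := fun a b => decidable_of_iff' _ (SimpleGraph.fromRel_adj _ a b)
instance : DecidableRel C6pp.Adj := fun a b => decidable_of_iff' _ (SimpleGraph.fromRel_adj _ a b)
instance : DecidableRel K13.Adj := fun a b => decidable_of_iff' _ (SimpleGraph.fromRel_adj _ a b)

lemma mem_closedNbhdSet_iff {V : Type*} (G : SimpleGraph V) (D : Set V) (x : V) :
    x ∈ G.closedNbhdSet D ↔ x ∈ D ∨ ∃ v ∈ D, G.Adj v x := by
  simp [SimpleGraph.closedNbhdSet]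

lemma iso_containsCopy {V W X : Type*} {G : SimpleGraph V} {G' : SimpleGraph W}
    (e : G ≃g G') {H : SimpleGraph X} (h : G.ContainsCopy H) : G'.ContainsCopy H := by
  obtain ⟨f, hf⟩ := h
  exact ⟨f.trans e.toEmbedding.toEmbedding, fun a b hab => e.map_adj_iff.2 (hf a b hab)⟩

lemma image_neighborSet {V W : Type*} {G : SimpleGraph V} {G' : SimpleGraph W}
    (e : G ≃g G') (u : V) : ⇑e '' G.neighborSet u = G'.neighborSet (e u) := by
  ext y
  constructor
  · rintro ⟨z, hz, rfl⟩
    exact e.map_adj_iff.2 hz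
  · intro hy
    refine ⟨e.symm y, ?_, e.apply_symm_apply y⟩
    have := e.symm.map_adj_iff.2 hy
    rwa [e.symm_apply_apply] at this

lemma image_closedNbhdSet {V W : Type*} {G : SimpleGraph V} {G' : SimpleGraph W}
    (e : G ≃g G') (D : Set V) :
    ⇑e '' G.closedNbhdSet D = G'.closedNbhdSet (⇑e '' D) := by
  simp only [SimpleGraph.closedNbhdSet, Set.image_union, Set.image_iUnion,
    Set.biUnion_image, image_neighborSet e]
def isoInduceImage {V W : Type*} {G : SimpleGraph V} {G' : SimpleGraph W}
    (e : G ≃g G') (s : Set V) : G.induce s ≃g G'.induce (⇑e '' s) where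
  toEquiv := e.toEquiv.image s
  map_rel_iff' := by
    intro a b
    simp only [Equiv.image, Equiv.coe_fn_mk, SimpleGraph.comap_adj,
      Function.Embedding.coe_subtype]
    exact e.map_adj_iff

lemma iso_isolating {V W : Type*} {G : SimpleGraph V} {G' : SimpleGraph W} (e : G ≃g G')
    {F : Set ((n : ℕ) × SimpleGraph (Fin n))} {D : Set V}
    (hD : G.IsIsolatingSet F D) : G'.IsIsolatingSet F (⇑e '' D) := by
  intro H hH hcopy
  apply hD H hH
  have hset : ⇑e '' (G.closedNbhdSet D)ᶜ = (G'.closedNbhdSet (⇑e '' D))ᶜ := by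
    rw [show ⇑e '' (G.closedNbhdSet D)ᶜ = ⇑e.toEquiv '' (G.closedNbhdSet D)ᶜ from rfl,
      Set.image_compl_eq e.toEquiv.bijective]
    rw [show ⇑e.toEquiv '' G.closedNbhdSet D = ⇑e '' G.closedNbhdSet D from rfl,
      image_closedNbhdSet e]
  rw [← hset] at hcopy
  exact iso_containsCopy (isoInduceImage e (G.closedNbhdSet D)ᶜ).symm hcopy
lemma univ_isolating {V : Type*} (G : SimpleGraph V) :
    G.IsIsolatingSet (EkFamily 2) Set.univ := by
  rintro ⟨n, H⟩ ⟨hconn, -⟩ ⟨f, -⟩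
  obtain ⟨i⟩ := hconn.nonempty
  exact (f i).2 (Set.mem_union_left _ (Set.mem_univ _))

lemma lt_isolation {V : Type*} {G : SimpleGraph V} {k : ℕ}
    (h : ∀ D : Set V, G.IsIsolatingSet (EkFamily 2) D → k < D.ncard) :
    k < G.isolationNumber (EkFamily 2) := by
  have hne : (Set.ncard '' {D : Set V | G.IsIsolatingSet (EkFamily 2) D}).Nonempty :=
    ⟨_, Set.mem_image_of_mem _ (univ_isolating G)⟩
  obtain ⟨D, hD, hcard⟩ := Nat.sInf_mem hne
  unfold SimpleGraph.isolationNumber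
  rw [← hcard]
  exact h D hD

lemma lt_iso {V : Type*} {n k : ℕ} {G : SimpleGraph V} {H : SimpleGraph (Fin n)} (e : G ≃g H)
    (hH : ∀ D : Set (Fin n), H.IsIsolatingSet (EkFamily 2) D → k < D.ncard) :
    k < G.isolationNumber (EkFamily 2) :=
  lt_isolation fun D hD => by
    rw [← Set.ncard_image_of_injective D e.injective]
    exact hH _ (iso_isolating e hD)

lemma numLeaves_eq {V W : Type*} {G : SimpleGraph V} {G' : SimpleGraph W} (e : G ≃g G') :
    G.numLeaves = G'.numLeaves := by
  have himg : ⇑e '' G.leafSet = G'.leafSet := by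
    ext y
    simp only [SimpleGraph.leafSet, Set.mem_setOf_eq]
    constructor
    · rintro ⟨z, hz, rfl⟩
      rwa [← image_neighborSet e, Set.ncard_image_of_injective _ e.injective]
    · intro hy
      refine ⟨e.symm y, ?_, e.apply_symm_apply y⟩
      simp only [Set.mem_setOf_eq]
      rw [← Set.ncard_image_of_injective _ e.injective, image_neighborSet e,
        e.apply_symm_apply]
      exact hy
  unfold SimpleGraph.numLeaves
  rw [← himg, Set.ncard_image_of_injective _ e.injective]
lemma P3_mem : (⟨3, pathGraph 3⟩ : (n : ℕ) × SimpleGraph (Fin n)) ∈ EkFamily 2 := by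
  refine ⟨pathGraph_connected 2, ?_⟩
  have h1 : s(0, 1) ∈ (pathGraph 3).edgeSet := by
    rw [SimpleGraph.mem_edgeSet, pathGraph_adj]; decide
  have h2 : s(1, 2) ∈ (pathGraph 3).edgeSet := by
    rw [SimpleGraph.mem_edgeSet, pathGraph_adj]; decide
  have hne : (s(0, 1) : Sym2 (Fin 3)) ≠ s(1, 2) := by decide
  exact (Set.one_lt_ncard_iff (Set.toFinite _)).2 ⟨_, _, h1, h2, hne⟩
lemma not_isolating_of_P3 {n : ℕ} (H : SimpleGraph (Fin n)) (D : Set (Fin n))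
    (a b c : Fin n)
    (ha : a ∉ H.closedNbhdSet D) (hb : b ∉ H.closedNbhdSet D) (hc : c ∉ H.closedNbhdSet D)
    (hab : a ≠ b) (hac : a ≠ c) (hbc : b ≠ c)
    (h1 : H.Adj a b) (h2 : H.Adj b c) :
    ¬ H.IsIsolatingSet (EkFamily 2) D := by
  intro hiso
  apply hiso ⟨3, pathGraph 3⟩ P3_mem
  refine ⟨⟨![⟨a, ha⟩, ⟨b, hb⟩, ⟨c, hc⟩], ?_⟩, ?_⟩
  · intro i j hij
    fin_cases i <;> fin_cases j <;> simp_all [Subtype.ext_iff]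
  · intro i j hij
    fin_cases i <;> fin_cases j <;>
      simp_all [pathGraph_adj, SimpleGraph.comap_adj, Function.Embedding.coe_subtype] <;>
      first
        | exact h1 | exact h1.symm | exact h2 | exact h2.symm
lemma not_mem_cn_singleton {n : ℕ} {H : SimpleGraph (Fin n)} {v x : Fin n}
    (h1 : x ≠ v) (h2 : ¬ H.Adj v x) : x ∉ H.closedNbhdSet {v} := by
  rw [mem_closedNbhdSet_iff]
  rintro (h | ⟨w, hw, hadj⟩)
  · exact h1 h
  · rw [Set.mem_singleton_iff] at hw
    subst hw
    exact h2 hadj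

lemma not_isolating_single {n : ℕ} (H : SimpleGraph (Fin n)) (v a b c : Fin n)
    (h : (a ≠ v ∧ ¬H.Adj v a) ∧ (b ≠ v ∧ ¬H.Adj v b) ∧ (c ≠ v ∧ ¬H.Adj v c) ∧
      a ≠ b ∧ a ≠ c ∧ b ≠ c ∧ H.Adj a b ∧ H.Adj b c) :
    ¬ H.IsIsolatingSet (EkFamily 2) {v} := by
  obtain ⟨⟨ha1, ha2⟩, ⟨hb1, hb2⟩, ⟨hc1, hc2⟩, hab, hac, hbc, h1, h2⟩ := h
  exact not_isolating_of_P3 H {v} a b c (not_mem_cn_singleton ha1 ha2)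
    (not_mem_cn_singleton hb1 hb2) (not_mem_cn_singleton hc1 hc2) hab hac hbc h1 h2

lemma not_isolating_empty {n : ℕ} (H : SimpleGraph (Fin n)) (a b c : Fin n)
    (h : a ≠ b ∧ a ≠ c ∧ b ≠ c ∧ H.Adj a b ∧ H.Adj b c) :
    ¬ H.IsIsolatingSet (EkFamily 2) ∅ := by
  obtain ⟨hab, hac, hbc, h1, h2⟩ := h
  have hcn : H.closedNbhdSet ∅ = ∅ := by
    simp [SimpleGraph.closedNbhdSet]
  exact not_isolating_of_P3 H ∅ a b c (by simp [hcn]) (by simp [hcn]) (by simp [hcn])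
    hab hac hbc h1 h2

lemma bound_two_of {n : ℕ} (H : SimpleGraph (Fin n))
    (he : ¬ H.IsIsolatingSet (EkFamily 2) ∅)
    (hs : ∀ v, ¬ H.IsIsolatingSet (EkFamily 2) {v}) :
    ∀ D : Set (Fin n), H.IsIsolatingSet (EkFamily 2) D → 1 < D.ncard := by
  intro D hD
  by_contra hle
  push_neg at hle
  rcases (Set.ncard_le_one_iff_eq (Set.toFinite D)).1 hle with rfl | ⟨v, rfl⟩
  · exact he hD
  · exact hs v hD

lemma bound_one_of {n : ℕ} (H : SimpleGraph (Fin n))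
    (he : ¬ H.IsIsolatingSet (EkFamily 2) ∅) :
    ∀ D : Set (Fin n), H.IsIsolatingSet (EkFamily 2) D → 0 < D.ncard := by
  intro D hD
  by_contra hle
  push_neg at hle
  rw [Nat.le_zero, Set.ncard_eq_zero (Set.toFinite D)] at hle
  subst hle
  exact he hD
instance {n : ℕ} : DecidableRel (pathGraph n).Adj :=
  fun _ _ => decidable_of_iff' _ pathGraph_adj

lemma p3_bound : ∀ D : Set (Fin 3), (pathGraph 3).IsIsolatingSet (EkFamily 2) D → 0 < D.ncard :=
  bound_one_of _ (not_isolating_empty _ 0 1 2 (by decide))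

lemma k3_bound : ∀ D : Set (Fin 3),
    (⊤ : SimpleGraph (Fin 3)).IsIsolatingSet (EkFamily 2) D → 0 < D.ncard :=
  bound_one_of _ (not_isolating_empty _ 0 1 2 (by decide))

lemma k13_bound : ∀ D : Set (Fin 4), K13.IsIsolatingSet (EkFamily 2) D → 0 < D.ncard :=
  bound_one_of _ (not_isolating_empty _ 1 0 2 (by decide))

lemma c6_bound : ∀ D : Set (Fin 6), (cycleGraph 6).IsIsolatingSet (EkFamily 2) D → 1 < D.ncard := by
  refine bound_two_of _ (not_isolating_empty _ 0 1 2 (by decide)) ?_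
  intro v
  fin_cases v
  · exact not_isolating_single _ _ 2 3 4 (by decide)
  · exact not_isolating_single _ _ 3 4 5 (by decide)
  · exact not_isolating_single _ _ 4 5 0 (by decide)
  · exact not_isolating_single _ _ 5 0 1 (by decide)
  · exact not_isolating_single _ _ 0 1 2 (by decide)
  · exact not_isolating_single _ _ 1 2 3 (by decide)

lemma c6p_bound : ∀ D : Set (Fin 7), C6p.IsIsolatingSet (EkFamily 2) D → 1 < D.ncard := by
  refine bound_two_of _ (not_isolating_empty _ 1 2 3 (by decide)) ?_
  intro v
  fin_cases v
  · exact not_isolating_single _ _ 2 3 4 (by decide)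
  · exact not_isolating_single _ _ 3 4 5 (by decide)
  · exact not_isolating_single _ _ 4 5 0 (by decide)
  · exact not_isolating_single _ _ 1 0 5 (by decide)
  · exact not_isolating_single _ _ 6 0 1 (by decide)
  · exact not_isolating_single _ _ 1 2 3 (by decide)
  · exact not_isolating_single _ _ 1 2 3 (by decide)

lemma c6pp_bound : ∀ D : Set (Fin 7), C6pp.IsIsolatingSet (EkFamily 2) D → 1 < D.ncard := by
  refine bound_two_of _ (not_isolating_empty _ 1 2 3 (by decide)) ?_
  intro v
  fin_cases v
  · exact not_isolating_single _ _ 2 3 4 (by decide)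
  · exact not_isolating_single _ _ 3 4 5 (by decide)
  · exact not_isolating_single _ _ 6 0 5 (by decide)
  · exact not_isolating_single _ _ 1 0 5 (by decide)
  · exact not_isolating_single _ _ 6 0 1 (by decide)
  · exact not_isolating_single _ _ 1 2 3 (by decide)
  · exact not_isolating_single _ _ 1 2 3 (by decide)

lemma leaf_of {n : ℕ} (H : SimpleGraph (Fin n)) (x u : Fin n)
    (h : ∀ y, H.Adj x y ↔ y = u) : x ∈ H.leafSet := by
  have hns : H.neighborSet x = {u} := by
    ext y
    simpa using h y
  simp only [SimpleGraph.leafSet, Set.mem_setOf_eq, hns, Set.ncard_singleton]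

lemma k13_leaves : 3 ≤ K13.numLeaves := by
  have sub : ({1, 2, 3} : Set (Fin 4)) ⊆ K13.leafSet := by
    intro x hx
    simp only [Set.mem_insert_iff, Set.mem_singleton_iff] at hx
    rcases hx with rfl | rfl | rfl
    · exact leaf_of _ _ 0 (by decide)
    · exact leaf_of _ _ 0 (by decide)
    · exact leaf_of _ _ 0 (by decide)
  have h3 : ({1, 2, 3} : Set (Fin 4)).ncard = 3 :=
    Set.ncard_eq_three.2 ⟨1, 2, 3, by decide, by decide, by decide, rfl⟩
  calc 3 = ({1, 2, 3} : Set (Fin 4)).ncard := h3.symm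
    _ ≤ K13.leafSet.ncard := Set.ncard_le_ncard sub (Set.toFinite _)

lemma c6p_leaves : 1 ≤ C6p.numLeaves :=
  (Set.ncard_pos (Set.toFinite _)).2 ⟨6, leaf_of _ _ 0 (by decide)⟩

lemma c6pp_leaves : 1 ≤ C6pp.numLeaves :=
  (Set.ncard_pos (Set.toFinite _)).2 ⟨6, leaf_of _ _ 0 (by decide)⟩

theorem stmt_19 {V : Type*} [Fintype V] (G : SimpleGraph V)
    (hS : Nonempty (G ≃g SimpleGraph.pathGraph 3) ∨
          Nonempty (G ≃g (⊤ : SimpleGraph (Fin 3))) ∨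
          Nonempty (G ≃g K13) ∨
          Nonempty (G ≃g SimpleGraph.cycleGraph 6) ∨
          Nonempty (G ≃g C6p) ∨
          Nonempty (G ≃g C6pp)) :
    (4 * Fintype.card V - G.numLeaves) / 14 < G.isolationNumber (EkFamily 2) := by
  rcases hS with h | h | h | h | h | h <;> obtain ⟨e⟩ := h
  · have hcard : Fintype.card V = 3 := by rw [Fintype.card_congr e.toEquiv, Fintype.card_fin]
    have hi : 0 < G.isolationNumber (EkFamily 2) := lt_iso e p3_bound
    omega
  · have hcard : Fintype.card V = 3 := by rw [Fintype.card_congr e.toEquiv, Fintype.card_fin]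
    have hi : 0 < G.isolationNumber (EkFamily 2) := lt_iso e k3_bound
    omega
  · have hcard : Fintype.card V = 4 := by rw [Fintype.card_congr e.toEquiv, Fintype.card_fin]
    have hi : 0 < G.isolationNumber (EkFamily 2) := lt_iso e k13_bound
    have hl : 3 ≤ G.numLeaves := by rw [numLeaves_eq e]; exact k13_leaves
    omega
  · have hcard : Fintype.card V = 6 := by rw [Fintype.card_congr e.toEquiv, Fintype.card_fin]
    have hi : 1 < G.isolationNumber (EkFamily 2) := lt_iso e c6_bound
    omega
  · have hcard : Fintype.card V = 7 := by rw [Fintype.card_congr e.toEquiv, Fintype.card_fin]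
    have hi : 1 < G.isolationNumber (EkFamily 2) := lt_iso e c6p_bound
    have hl : 1 ≤ G.numLeaves := by rw [numLeaves_eq e]; exact c6p_leaves
    omega
  · have hcard : Fintype.card V = 7 := by rw [Fintype.card_congr e.toEquiv, Fintype.card_fin]
    have hi : 1 < G.isolationNumber (EkFamily 2) := lt_iso e c6pp_bound
    have hl : 1 ≤ G.numLeaves := by rw [numLeaves_eq e]; exact c6pp_leaves
    omega
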